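/- Let K be a field, ν a valuation on K[x] with trivial support, K̄ an algebraic closure of K, and μ an extension of ν to K̄[x]. If Q ∈ K[x] is a key polynomial for ν and a ∈ K̄ is a root of Q with μ(x−a) = δ(Q), then for every b ∈ K̄ with μ(a−b) ≥ δ(Q) one has μ(x−b) ≥ δ(Q), hence δ(p_b) ≥ δ(Q) where p_b is the minimal polynomial of b over K, and [K(b):K] ≥ [K(a):K]. -/

import Mathlib

open Polynomial

section KeyPolyDefs

variable {K : Type*} [Field K] {Γ : Type*} [AddCommGroup Γ] [LinearOrder Γ] [IsOrderedAddMonoid Γ]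

/-- The value `ν f` read in `Γ` (junk value `0` when `ν f = ⊤`). -/
noncomputable def aval (ν : AddValuation (Polynomial K) (WithTop Γ)) (f : Polynomial K) : Γ :=
  WithTop.untopD 0 (ν f)

/-- `ν` has trivial support: only `0` has value `⊤`. -/
def TrivialSupport (ν : AddValuation (Polynomial K) (WithTop Γ)) : Prop :=
  ∀ f : Polynomial K, ν f = ⊤ → f = 0

/-- The set of indices `r`, `1 ≤ r ≤ deg f` with `∂_r f ≠ 0`, over which `ε(f)` is computed. -/
noncomputable def epsSupport (f : Polynomial K) : Finset ℕ :=
  @Finset.filter _ (fun r => f.hasseDeriv r ≠ 0) (Classical.decPred _) (Finset.Icc 1 f.natDegree)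

/-- `ε(f) = max_{r ≥ 1} (ν f - ν ∂_r f) / r`, computed in the divisible group `Γ`. -/
noncomputable def eps [Module ℚ Γ] (ν : AddValuation (Polynomial K) (WithTop Γ))
    (f : Polynomial K) : Γ :=
  if h : (epsSupport f).Nonempty then
    (epsSupport f).sup' h fun r => ((r : ℚ)⁻¹) • (aval ν f - aval ν (f.hasseDeriv r))
  else 0

/-- `Q` is a key polynomial for `ν`: `Q` is monic and every `f` with `ε(f) ≥ ε(Q)` satisfies
`deg f ≥ deg Q`. -/
def IsKeyPoly [Module ℚ Γ] (ν : AddValuation (Polynomial K) (WithTop Γ))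
    (Q : Polynomial K) : Prop :=
  Q.Monic ∧ 0 < Q.natDegree ∧
    ∀ f : Polynomial K, 0 < f.natDegree → eps ν Q ≤ eps ν f → Q.natDegree ≤ f.natDegree

/-- The `i`-th coefficient of the `q`-expansion of a polynomial. -/
noncomputable def qCoeff (q : Polynomial K) : ℕ → Polynomial K → Polynomial K
  | 0, p => p % q
  | n + 1, p => qCoeff q n (p / q)

/-- The `q`-truncation `ν_q` of `ν`:  `ν_q(p) = min_i ν(p_i q^i)` where `p = Σ p_i q^i`
is the `q`-expansion of `p`. -/
noncomputable def trunc (ν : AddValuation (Polynomial K) (WithTop Γ)) (q p : Polynomial K) :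
    WithTop Γ :=
  (Finset.range (p.natDegree + 1)).inf fun i => ν (qCoeff q i p * q ^ i)

variable {L : Type*} [Field L] [Algebra K L]

/-- `δ(f)`: the maximal value `μ(x - a)` over the roots `a` of `f` in `L`
(junk value `0` if `f` has no roots in `L`). -/
noncomputable def delta (μ : AddValuation (Polynomial L) (WithTop Γ)) (f : Polynomial K) : Γ :=
  letI := Classical.decEq L
  if h : ((f.map (algebraMap K L)).roots.toFinset).Nonempty then
    ((f.map (algebraMap K L)).roots.toFinset).sup' h fun a => aval μ (X - C a)
  else 0

/-- `μ` on `L[x]` extends `ν` on `K[x]`. -/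
def IsExtension (μ : AddValuation (Polynomial L) (WithTop Γ))
    (ν : AddValuation (Polynomial K) (WithTop Γ)) : Prop :=
  ∀ f : Polynomial K, μ (f.map (algebraMap K L)) = ν f

/-- `w` on `K(x)` extends `ν` on `K[x]`. -/
def ExtendsToRatFunc (w : AddValuation (RatFunc K) (WithTop Γ))
    (ν : AddValuation (Polynomial K) (WithTop Γ)) : Prop :=
  ∀ p : Polynomial K, w (algebraMap (Polynomial K) (RatFunc K) p) = ν p

/-- The residue of `f` is transcendental over the residue field `Kν`:  every polynomial with
coefficients in the valuation ring of `K`, at least one of which is a unit, keeps value `0`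
when evaluated at `f`. -/
def ResidueTranscendentalElem (w : AddValuation (RatFunc K) (WithTop Γ)) (f : RatFunc K) : Prop :=
  ∀ (n : ℕ) (c : ℕ → K),
    (∀ i ≤ n, 0 ≤ w (algebraMap K (RatFunc K) (c i))) →
    (∃ i ≤ n, w (algebraMap K (RatFunc K) (c i)) = 0) →
    w (∑ i ∈ Finset.range (n + 1), algebraMap K (RatFunc K) (c i) * f ^ i) = 0

/-- The residue of `g` is algebraic over the residue field `Kν`: some polynomial with
coefficients in the valuation ring of `K`, at least one of which is a unit, gets positive
value when evaluated at `g`. -/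
def ResidueAlgebraicElem (w : AddValuation (RatFunc K) (WithTop Γ)) (g : RatFunc K) : Prop :=
  ∃ (n : ℕ) (c : ℕ → K),
    (∀ i ≤ n, 0 ≤ w (algebraMap K (RatFunc K) (c i))) ∧
    (∃ i ≤ n, w (algebraMap K (RatFunc K) (c i)) = 0) ∧
    0 < w (∑ i ∈ Finset.range (n + 1), algebraMap K (RatFunc K) (c i) * g ^ i)

/-- `w` is residue-transcendental: some `f` with `w f = 0` has transcendental residue. -/
def IsResidueTranscendental (w : AddValuation (RatFunc K) (WithTop Γ)) : Prop :=
  ∃ f : RatFunc K, w f = 0 ∧ ResidueTranscendentalElem w f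

/-- `w` is value-transcendental: some value `w f` is torsion-free over the value group
`νK` of `K`, i.e. `n ν(f) ∉ νK` for every `n ≥ 1`. -/
def IsValueTranscendental (w : AddValuation (RatFunc K) (WithTop Γ)) : Prop :=
  ∃ f : RatFunc K, f ≠ 0 ∧
    ∀ n : ℕ, 0 < n → ∀ c : K, c ≠ 0 → w (f ^ n) ≠ w (algebraMap K (RatFunc K) c)

/-- `w` is valuation-transcendental: it is value-transcendental or residue-transcendental. -/
def IsValuationTranscendental (w : AddValuation (RatFunc K) (WithTop Γ)) : Prop :=
  IsValueTranscendental w ∨ IsResidueTranscendental w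

end KeyPolyDefs

section MinimalPairDefs

variable {Γ : Type*} [AddCommGroup Γ] [LinearOrder Γ] [IsOrderedAddMonoid Γ] {L : Type*} [Field L]

/-- `(a, d)` is a minimal pair for the valuation (w.r.t. the extension `μ` to `L[x]`):
every `b` with `μ(b - a) ≥ d` satisfies `[K(b) : K] ≥ [K(a) : K]`. -/
def IsMinimalPair (K : Type*) [Field K] [Algebra K L]
    (μ : AddValuation (Polynomial L) (WithTop Γ)) (a : L) (d : Γ) : Prop :=
  ∀ b : L, (d : WithTop Γ) ≤ μ (C (b - a)) →
    (minpoly K a).natDegree ≤ (minpoly K b).natDegree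

/-- `(a, d)` is a minimal pair of definition: a minimal pair with `μ(x - a) = d ≥ μ(x - b)`
for every `b ∈ L`. -/
def IsMinimalPairOfDefinition (K : Type*) [Field K] [Algebra K L]
    (μ : AddValuation (Polynomial L) (WithTop Γ)) (a : L) (d : Γ) : Prop :=
  IsMinimalPair K μ a d ∧ μ (X - C a) = (d : WithTop Γ) ∧
    ∀ b : L, μ (X - C b) ≤ (d : WithTop Γ)

end MinimalPairDefs

/-! Everything rests on the identity `ε(f) = δ(f)` for nonconstant `f ∈ K[x]`. Over `K̄` write
`f = c ∏ (x - aᵢ)`. If all `μ(x - aᵢ) ≤ d`, the Leibniz rule gives `μ(f) ≤ μ(∂ₖ f) + k d` for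
every `k`; for `d = δ(f)` and `k` the number of roots with `μ(x - aᵢ) = δ(f)`, the term
`c ∏_{μ(x - aᵢ) < δ(f)} (x - aᵢ)` strictly dominates `∂ₖ f`, and equality holds. Hence
`ε(f) = δ(f)`.

For `b` with `μ(a - b) ≥ δ(Q)`, the ultrametric inequality gives `μ(x - b) ≥ δ(Q)`, so
`ε(p_b) = δ(p_b) ≥ μ(x - b) ≥ δ(Q) = ε(Q)`, and the key polynomial property yields
`[K(b) : K] = deg p_b ≥ deg Q ≥ [K(a) : K]`. -/

theorem inv_natCast_smul_le_iff {Γ : Type*} [AddCommGroup Γ] [LinearOrder Γ]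
    [IsOrderedAddMonoid Γ] [Module ℚ Γ] {n : ℕ} (hn : n ≠ 0) {x y : Γ} :
    (n : ℚ)⁻¹ • x ≤ y ↔ x ≤ n • y := by
  rw [← nsmul_le_nsmul_iff_right hn, ← Nat.cast_smul_eq_nsmul ℚ n ((n : ℚ)⁻¹ • x), smul_smul,
    mul_inv_cancel₀ (Nat.cast_ne_zero.2 hn), one_smul]

theorem inv_natCast_smul_nsmul {Γ : Type*} [AddCommGroup Γ] [Module ℚ Γ] {n : ℕ} (hn : n ≠ 0)
    (x : Γ) : (n : ℚ)⁻¹ • (n • x) = x := by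
  rw [← Nat.cast_smul_eq_nsmul ℚ, smul_smul, inv_mul_cancel₀ (Nat.cast_ne_zero.2 hn), one_smul]

namespace Polynomial

theorem hasseDeriv_map {R S : Type*} [Semiring R] [Semiring S] (φ : R →+* S) (f : R[X]) (k : ℕ) :
    (hasseDeriv k f).map φ = hasseDeriv k (f.map φ) := by
  ext n
  simp [coeff_map, hasseDeriv_coeff]

theorem hasseDeriv_succ_X_sub_C_mul {R : Type*} [CommRing R] (a : R) (p : R[X]) (k : ℕ) :
    hasseDeriv (k + 1) ((X - C a) * p) = (X - C a) * hasseDeriv (k + 1) p + hasseDeriv k p := by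
  rw [hasseDeriv_mul, Finset.Nat.sum_antidiagonal_succ, hasseDeriv_zero',
    Finset.sum_eq_single (0, k)]
  · simp
  · rintro ⟨i, j⟩ hmem hij
    have hi : i ≠ 0 := by rintro rfl; simp_all
    rw [hasseDeriv_eq_zero_of_lt_natDegree _ _ ((natDegree_X_sub_C_le a).trans_lt (by omega)),
      zero_mul]
  · simp

theorem hasseDeriv_card_multiset_prod_X_sub_C {R : Type*} [CommRing R] [Nontrivial R]
    (s : Multiset R) : hasseDeriv (Multiset.card s) (s.map (X - C ·)).prod = 1 := by
  have hmonic : (s.map (X - C ·)).prod.Monic :=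
    monic_multiset_prod_of_monic _ _ fun a _ => monic_X_sub_C a
  rw [← natDegree_multiset_prod_X_sub_C_eq_card, hasseDeriv_natDegree_eq_C, hmonic.leadingCoeff,
    C_1]

end Polynomial

namespace AddValuation

variable {R : Type*} [CommRing R] {Γ : Type*} [AddCommGroup Γ] [LinearOrder Γ]
  [IsOrderedAddMonoid Γ] (μ : AddValuation R[X] (WithTop Γ))

theorem map_prod_X_sub_C_le_map_hasseDeriv_add (d : WithTop Γ) {t : Multiset R}
    (ht : ∀ a ∈ t, μ (X - C a) ≤ d) (k : ℕ) :
    μ (t.map (X - C ·)).prod ≤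
      μ (hasseDeriv k (t.map (X - C ·)).prod) + k • d := by
  induction t using Multiset.induction generalizing k with
  | empty =>
    cases k with
    | zero => simp
    | succ k => simp [hasseDeriv_apply_one]
  | cons a s ih =>
    have hs : ∀ b ∈ s, μ (X - C b) ≤ d := fun b hb => ht b (Multiset.mem_cons_of_mem hb)
    cases k with
    | zero => simp
    | succ k =>
      rw [Multiset.map_cons, Multiset.prod_cons, hasseDeriv_succ_X_sub_C_mul, μ.map_mul]
      refine le_trans ?_ (add_le_add_left (μ.map_add _ _) _)
      rw [← min_add_add_right, le_min_iff, μ.map_mul]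
      constructor
      · rw [add_assoc]
        exact add_le_add_right (ih hs _) _
      · rw [succ_nsmul, ← add_assoc, add_comm (μ (X - C a))]
        exact add_le_add (ih hs k) (ht a (Multiset.mem_cons_self a s))

theorem map_prod_X_sub_C_ne_top {t : Multiset R} (ht : ∀ a ∈ t, μ (X - C a) ≠ ⊤) :
    μ (t.map (X - C ·)).prod ≠ ⊤ := by
  induction t using Multiset.induction with
  | empty => simp
  | cons a s ih =>
    rw [Multiset.map_cons, Multiset.prod_cons, μ.map_mul]
    exact WithTop.add_ne_top.2
      ⟨ht a (Multiset.mem_cons_self a s), ih fun b hb => ht b (Multiset.mem_cons_of_mem hb)⟩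

theorem map_prod_X_sub_C_of_forall_eq {d : WithTop Γ} {t : Multiset R}
    (ht : ∀ a ∈ t, μ (X - C a) = d) :
    μ (t.map (X - C ·)).prod = Multiset.card t • d := by
  induction t using Multiset.induction with
  | empty => simp
  | cons a s ih =>
    rw [Multiset.map_cons, Multiset.prod_cons, μ.map_mul, Multiset.card_cons, succ_nsmul',
      ht a (Multiset.mem_cons_self a s), ih fun b hb => ht b (Multiset.mem_cons_of_mem hb)]

theorem map_prod_X_sub_C_lt_map_hasseDeriv_add {d : Γ} {t : Multiset R}
    (ht : ∀ a ∈ t, μ (X - C a) < d) (k : ℕ) :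
    μ (t.map (X - C ·)).prod <
      μ (hasseDeriv (k + 1) (t.map (X - C ·)).prod) + (k + 1) • (d : WithTop Γ) := by
  induction t using Multiset.induction generalizing k with
  | empty => simp [hasseDeriv_apply_one]
  | cons a s ih =>
    have hs : ∀ b ∈ s, μ (X - C b) < d := fun b hb => ht b (Multiset.mem_cons_of_mem hb)
    have ha := ht a (Multiset.mem_cons_self a s)
    rw [Multiset.map_cons, Multiset.prod_cons, hasseDeriv_succ_X_sub_C_mul, μ.map_mul]
    refine lt_of_lt_of_le ?_ (add_le_add_left (μ.map_add _ _) _)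
    rw [← min_add_add_right, lt_min_iff, μ.map_mul]
    constructor
    · rw [add_assoc]
      exact WithTop.add_lt_add_left ha.ne_top (ih hs k)
    · rw [succ_nsmul, ← add_assoc, add_comm (μ (X - C a))]
      exact WithTop.add_lt_add_of_le_of_lt
        (map_prod_X_sub_C_ne_top μ fun b hb => (hs b hb).ne_top)
        (map_prod_X_sub_C_le_map_hasseDeriv_add μ d (fun b hb => (hs b hb).le) k) ha

theorem map_hasseDeriv_card_prod_X_sub_C_mul [Nontrivial R] {d : Γ} {S T : Multiset R}
    (hS : ∀ a ∈ S, μ (X - C a) = d) (hT : ∀ a ∈ T, μ (X - C a) < d) :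
    μ (hasseDeriv (Multiset.card S) ((S.map (X - C ·)).prod * (T.map (X - C ·)).prod)) =
      μ (T.map (X - C ·)).prod := by
  -- Only the Leibniz term `∂_{|S|} P_S * P_T = P_T` attains the minimal value.
  set PS := (S.map (X - C ·)).prod
  set PT := (T.map (X - C ·)).prod
  have hmem : (Multiset.card S, 0) ∈ Finset.HasAntidiagonal.antidiagonal (Multiset.card S) :=
    Finset.HasAntidiagonal.mem_antidiagonal.2 (add_zero _)
  rw [hasseDeriv_mul, ← Finset.add_sum_erase _ _ hmem, hasseDeriv_card_multiset_prod_X_sub_C,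
    hasseDeriv_zero', one_mul]
  refine μ.map_add_eq_of_lt_left (μ.map_lt_sum
    (map_prod_X_sub_C_ne_top μ fun a ha => (hT a ha).ne_top) ?_)
  rintro ⟨i, _ | j⟩ hij
  · simp_all
  have hij : i + (j + 1) = Multiset.card S :=
    Finset.HasAntidiagonal.mem_antidiagonal.1 (Finset.mem_of_mem_erase hij)
  have hc : Multiset.card S • (d : WithTop Γ) ≠ ⊤ := by simp [← WithTop.coe_nsmul]
  have key : Multiset.card S • (d : WithTop Γ) + μ PT <
      Multiset.card S • (d : WithTop Γ) + μ (hasseDeriv i PS * hasseDeriv (j + 1) PT) :=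
    calc Multiset.card S • (d : WithTop Γ) + μ PT = μ PS + μ PT := by
          rw [map_prod_X_sub_C_of_forall_eq μ hS]
      _ < (μ (hasseDeriv i PS) + i • (d : WithTop Γ)) +
          (μ (hasseDeriv (j + 1) PT) + (j + 1) • (d : WithTop Γ)) :=
        WithTop.add_lt_add_of_le_of_lt (map_prod_X_sub_C_ne_top μ fun a ha => by simp [hS a ha])
          (map_prod_X_sub_C_le_map_hasseDeriv_add μ d (fun a ha => (hS a ha).le) i)
          (map_prod_X_sub_C_lt_map_hasseDeriv_add μ hT j)
      _ = _ := by
        rw [μ.map_mul, ← hij, add_nsmul _ i, add_add_add_comm, add_comm]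
  exact (WithTop.add_lt_add_iff_left hc).1 key

theorem exists_map_prod_X_sub_C_eq_map_hasseDeriv_add [Nontrivial R] {d : Γ} {t : Multiset R}
    (ht : ∀ a ∈ t, μ (X - C a) ≤ d) (hd : ∃ a ∈ t, μ (X - C a) = d) :
    ∃ r ≠ 0, μ (t.map (X - C ·)).prod =
      μ (hasseDeriv r (t.map (X - C ·)).prod) + r • (d : WithTop Γ) := by
  classical
  obtain ⟨a, hat, had⟩ := hd
  set S := t.filter fun a => μ (X - C a) = d
  set T := t.filter fun a => μ (X - C a) ≠ d
  have hS : ∀ a ∈ S, μ (X - C a) = d := fun a ha => (Multiset.mem_filter.1 ha).2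
  have hT : ∀ a ∈ T, μ (X - C a) < d := fun a ha =>
    lt_of_le_of_ne (ht a (Multiset.mem_filter.1 ha).1) (Multiset.mem_filter.1 ha).2
  refine ⟨Multiset.card S,
    (Multiset.card_pos_iff_exists_mem.2 ⟨a, Multiset.mem_filter.2 ⟨hat, had⟩⟩).ne', ?_⟩
  rw [← Multiset.filter_add_not (fun a => μ (X - C a) = d) t, Multiset.map_add,
    Multiset.prod_add, map_hasseDeriv_card_prod_X_sub_C_mul μ hS hT, μ.map_mul,
    map_prod_X_sub_C_of_forall_eq μ hS, add_comm]

end AddValuation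

section KeyPolynomial

variable {K : Type*} [Field K] {Γ : Type*} [AddCommGroup Γ] [LinearOrder Γ]
  [IsOrderedAddMonoid Γ] {L : Type*} [Field L] [Algebra K L]
  {ν : AddValuation K[X] (WithTop Γ)} {μ : AddValuation L[X] (WithTop Γ)}

theorem coe_aval {f : K[X]} (hf : ν f ≠ ⊤) : ((aval ν f : Γ) : WithTop Γ) = ν f := by
  obtain ⟨g, hg⟩ := WithTop.ne_top_iff_exists.1 hf
  rw [aval, ← hg]
  rfl

theorem IsExtension.trivialSupport (hext : IsExtension μ ν) (hμ : TrivialSupport μ) :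
    TrivialSupport ν := fun f hf =>
  (Polynomial.map_eq_zero_iff (algebraMap K L).injective).1 (hμ _ ((hext f).trans hf))

theorem valuation_X_sub_C_le_delta (hμ : TrivialSupport μ) {f : K[X]} {b : L}
    (hb : b ∈ (f.map (algebraMap K L)).roots) : μ (X - C b) ≤ delta μ f := by
  classical
  have hb' := Multiset.mem_toFinset.2 hb
  rw [delta, dif_pos ⟨b, hb'⟩, ← coe_aval (fun h => X_sub_C_ne_zero b (hμ _ h))]
  exact WithTop.coe_le_coe.2 (Finset.le_sup' (fun a => aval μ (X - C a)) hb')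

theorem exists_valuation_X_sub_C_eq_delta (hμ : TrivialSupport μ) {f : K[X]}
    (hf : (f.map (algebraMap K L)).roots ≠ 0) :
    ∃ a ∈ (f.map (algebraMap K L)).roots, μ (X - C a) = delta μ f := by
  classical
  have hne := Multiset.toFinset_nonempty.2 hf
  obtain ⟨a, ha, hsup⟩ := Finset.exists_mem_eq_sup' hne fun a => aval μ (X - C a)
  refine ⟨a, Multiset.mem_toFinset.1 ha, ?_⟩
  rw [delta, dif_pos hne, hsup, coe_aval (fun h => X_sub_C_ne_zero a (hμ _ h))]

theorem mem_epsSupport {f : K[X]} {r : ℕ} :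
    r ∈ epsSupport f ↔ r ∈ Finset.Icc 1 f.natDegree ∧ f.hasseDeriv r ≠ 0 := by
  simp [epsSupport]

variable [Module ℚ Γ]

theorem eps_eq_of_forall_le_of_eq (hν : TrivialSupport ν) {f : K[X]} (hf : f ≠ 0) {d : Γ}
    (hle : ∀ k : ℕ, ν f ≤ ν (f.hasseDeriv k) + k • (d : WithTop Γ)) {r : ℕ} (hr : r ≠ 0)
    (heq : ν f = ν (f.hasseDeriv r) + r • (d : WithTop Γ)) : eps ν f = d := by
  have hfin : ν f ≠ ⊤ := fun h => hf (hν f h)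
  have hrfin : ν (f.hasseDeriv r) ≠ ⊤ := fun h => hfin (by rw [heq, h, top_add])
  have hr_mem : r ∈ epsSupport f := by
    refine mem_epsSupport.2 ⟨Finset.mem_Icc.2 ⟨Nat.one_le_iff_ne_zero.2 hr, ?_⟩,
      fun h => hrfin (by rw [h, ν.map_zero])⟩
    by_contra! hlt
    exact hrfin (by rw [hasseDeriv_eq_zero_of_lt_natDegree _ _ hlt, ν.map_zero])
  rw [eps, dif_pos ⟨r, hr_mem⟩]
  refine le_antisymm (Finset.sup'_le _ _ fun k hk => ?_) (Finset.le_sup'_of_le _ hr_mem ?_)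
  · obtain ⟨hk, hk0⟩ := mem_epsSupport.1 hk
    rw [inv_natCast_smul_le_iff (Nat.one_le_iff_ne_zero.1 (Finset.mem_Icc.1 hk).1),
      sub_le_iff_le_add', ← WithTop.coe_le_coe, WithTop.coe_add, WithTop.coe_nsmul, coe_aval hfin,
      coe_aval fun h => hk0 (hν _ h)]
    exact hle k
  · have haval : aval ν f = aval ν (f.hasseDeriv r) + r • d := by
      rw [← WithTop.coe_inj, WithTop.coe_add, WithTop.coe_nsmul, coe_aval hfin, coe_aval hrfin]
      exact heq
    rw [haval, add_sub_cancel_left, inv_natCast_smul_nsmul hr]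

theorem eps_eq_delta [IsAlgClosed L] (hμ : TrivialSupport μ) (hext : IsExtension μ ν)
    {f : K[X]} (hf : 0 < f.natDegree) : eps ν f = delta μ f := by
  have hf0 : f ≠ 0 := ne_zero_of_natDegree_gt hf
  set F := f.map (algebraMap K L)
  have hF0 : F ≠ 0 := (Polynomial.map_ne_zero_iff (algebraMap K L).injective).2 hf0
  have hroots : F.roots ≠ 0 := by
    obtain ⟨x, hx⟩ := IsAlgClosed.exists_root F (by
      rw [degree_map, degree_eq_natDegree hf0]; exact_mod_cast hf.ne')
    exact Multiset.card_pos.1 (Multiset.card_pos_iff_exists_mem.2 ⟨x, (mem_roots hF0).2 hx⟩)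
  set P := (F.roots.map (X - C ·)).prod
  have hsplit : F = C F.leadingCoeff * P := (IsAlgClosed.splits F).eq_prod_roots
  have hνk : ∀ k, ν (f.hasseDeriv k) = μ (C F.leadingCoeff) + μ (hasseDeriv k P) := by
    intro k
    rw [← hext, hasseDeriv_map]
    change μ (hasseDeriv k F) = _
    conv_lhs => rw [hsplit, ← smul_eq_C_mul, map_smul, smul_eq_C_mul, μ.map_mul]
  have hν : ν f = μ (C F.leadingCoeff) + μ P := by simpa using hνk 0
  have hle : ∀ a ∈ F.roots, μ (X - C a) ≤ delta μ f := fun a ha =>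
    valuation_X_sub_C_le_delta hμ ha
  obtain ⟨r, hr, heq⟩ := μ.exists_map_prod_X_sub_C_eq_map_hasseDeriv_add hle
    (exists_valuation_X_sub_C_eq_delta hμ hroots)
  refine eps_eq_of_forall_le_of_eq (hext.trivialSupport hμ) hf0 (fun k => ?_) hr ?_
  · rw [hν, hνk, add_assoc]
    exact add_le_add_right (μ.map_prod_X_sub_C_le_map_hasseDeriv_add _ hle k) _
  · rw [hν, hνk, add_assoc, ← heq]

end KeyPolynomial

theorem keyPoly_minimal_pair_property_general {K : Type*} [Field K] {Γ : Type*}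
    [AddCommGroup Γ] [LinearOrder Γ] [IsOrderedAddMonoid Γ] [Module ℚ Γ]
    {L : Type*} [Field L] [Algebra K L] [IsAlgClosure K L]
    (ν : AddValuation (Polynomial K) (WithTop Γ)) (μ : AddValuation (Polynomial L) (WithTop Γ))
    (hμ : TrivialSupport μ) (hext : IsExtension μ ν)
    (Q : Polynomial K) (hQ : IsKeyPoly ν Q)
    (a : L) (ha : Polynomial.aeval a Q = 0)
    (hamax : μ (X - C a) = ((delta μ Q : Γ) : WithTop Γ)) :
    ∀ b : L, ((delta μ Q : Γ) : WithTop Γ) ≤ μ (C (a - b)) →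
      ((delta μ Q : Γ) : WithTop Γ) ≤ μ (X - C b) ∧
      delta μ Q ≤ delta μ (minpoly K b) ∧
      (minpoly K a).natDegree ≤ (minpoly K b).natDegree := by
  have := IsAlgClosure.isAlgClosed K (K := L)
  intro b hb
  have hb_int : IsIntegral K b := Algebra.IsIntegral.isIntegral b
  have hXb : ((delta μ Q : Γ) : WithTop Γ) ≤ μ (X - C b) := by
    rw [show X - C b = (X - C a) + C (a - b) by rw [C_sub]; ring]
    exact μ.map_le_add hamax.ge hb
  have hδ : delta μ Q ≤ delta μ (minpoly K b) := WithTop.coe_le_coe.1 <| hXb.trans <|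
    valuation_X_sub_C_le_delta hμ <| (mem_roots_map_of_injective (algebraMap K L).injective
      (minpoly.ne_zero hb_int)).2 (minpoly.aeval K b)
  have hb_deg := minpoly.natDegree_pos hb_int
  have hdeg : Q.natDegree ≤ (minpoly K b).natDegree := hQ.2.2 _ hb_deg <| by
    rwa [eps_eq_delta hμ hext hQ.2.1, eps_eq_delta hμ hext hb_deg]
  exact ⟨hXb, hδ, (natDegree_le_of_dvd (minpoly.dvd K a ha) hQ.1.ne_zero).trans hdeg⟩

/-- If `Q` is a key polynomial for `ν` and `a` is a root of `Q` with
`μ(x - a) = δ(Q)`, then for every `b ∈ K̄` with `μ(a - b) ≥ δ(Q)` one has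
`μ(x - b) ≥ δ(Q)`, hence `δ(p_b) ≥ δ(Q)` where `p_b` is the minimal polynomial of `b` over
`K`, and `[K(b) : K] ≥ [K(a) : K]`. -/
theorem keyPoly_minimal_pair_property {K : Type*} [Field K] {Γ : Type*}
    [AddCommGroup Γ] [LinearOrder Γ] [IsOrderedAddMonoid Γ] [Module ℚ Γ]
    [PosSMulStrictMono ℚ Γ] [PosSMulReflectLT ℚ Γ]
    {L : Type*} [Field L] [Algebra K L] [IsAlgClosure K L]
    (ν : AddValuation (Polynomial K) (WithTop Γ)) (μ : AddValuation (Polynomial L) (WithTop Γ))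
    (hν : TrivialSupport ν) (hμ : TrivialSupport μ) (hext : IsExtension μ ν)
    (Q : Polynomial K) (hQ : IsKeyPoly ν Q)
    (a : L) (ha : Polynomial.aeval a Q = 0)
    (hamax : μ (X - C a) = ((delta μ Q : Γ) : WithTop Γ)) :
    ∀ b : L, ((delta μ Q : Γ) : WithTop Γ) ≤ μ (C (a - b)) →
      ((delta μ Q : Γ) : WithTop Γ) ≤ μ (X - C b) ∧
      delta μ Q ≤ delta μ (minpoly K b) ∧
      (minpoly K a).natDegree ≤ (minpoly K b).natDegree :=
  keyPoly_minimal_pair_property_general ν μ hμ hext Q hQ a ha hamax
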